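/- arXiv:2409.11240 — 3 statements merged into one kernel-verified Lean document; each statement's English description precedes it below -/
import Mathlib

section
/- Let F be L-smooth with gradient ∇F, and let g_n = ∇F_n(w_n) for L-smooth component functions F_n with Σ_n ρ_n ∇F_n(w) = ∇F(w) (ρ_n ≥ 0, Σρ_n = 1). Suppose each w_n = w − η ∇F_n(w; D_n) for some gradient vectors bounded via the dissimilarity assumption Σ_n ρ_n ‖∇F_n(w)‖² ≤ α²‖∇F(w)‖² + β². Then ‖∇F(w) − Σ_n ρ_n ∇F_n(w_n)‖² ≤ L²η²(α²‖∇F(w)‖² + β²). -/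
/-!
The drift is the `ρ`-average of the local changes `∇Fₙ(w) - ∇Fₙ(w - η∇Fₙ(w))`. Jensen's inequality
for the convex function `‖·‖²` bounds its square by the average of the squared changes, each of which
is at most `L²η²‖∇Fₙ(w)‖²` by Lipschitz continuity; averaging and bounded dissimilarity conclude.
-/

open Finset

theorem norm_sum_smul_sq_le {ι E : Type*} [SeminormedAddCommGroup E] [NormedSpace ℝ E]
    (s : Finset ι) (ρ : ι → ℝ) (v : ι → E) (hρ : ∀ i ∈ s, 0 ≤ ρ i) (hρsum : ∑ i ∈ s, ρ i = 1) :
    ‖∑ i ∈ s, ρ i • v i‖ ^ 2 ≤ ∑ i ∈ s, ρ i * ‖v i‖ ^ 2 :=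
  (convexOn_univ_norm.pow (fun x _ => norm_nonneg x) 2).map_sum_le hρ hρsum
    (fun _ _ => Set.mem_univ _)

theorem norm_sub_apply_sub_smul_sq_le {E F : Type*} [SeminormedAddCommGroup E] [NormedSpace ℝ E]
    [SeminormedAddCommGroup F] {f : E → F} {L : ℝ} (hf : ∀ x y, ‖f x - f y‖ ≤ L * ‖x - y‖)
    (x g : E) (η : ℝ) :
    ‖f x - f (x - η • g)‖ ^ 2 ≤ L ^ 2 * η ^ 2 * ‖g‖ ^ 2 := by
  have hstep : ‖f x - f (x - η • g)‖ ≤ L * (|η| * ‖g‖) := by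
    simpa [norm_smul] using hf x (x - η • g)
  calc ‖f x - f (x - η • g)‖ ^ 2 ≤ (L * (|η| * ‖g‖)) ^ 2 :=
        pow_le_pow_left₀ (norm_nonneg _) hstep 2
    _ = L ^ 2 * η ^ 2 * ‖g‖ ^ 2 := by rw [mul_pow, mul_pow, sq_abs, mul_assoc]

theorem fedsgd_single_step_drift_general {q N : ℕ}
    (gradF : EuclideanSpace ℝ (Fin q) → EuclideanSpace ℝ (Fin q))
    (gradFn : Fin N → EuclideanSpace ℝ (Fin q) → EuclideanSpace ℝ (Fin q))
    (L : ℝ)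
    (hLip : ∀ n x y, ‖gradFn n x - gradFn n y‖ ≤ L * ‖x - y‖)
    (ρ : Fin N → ℝ) (hρ : ∀ n, 0 ≤ ρ n) (hρsum : ∑ n, ρ n = 1)
    (hagg : ∀ x, ∑ n, ρ n • gradFn n x = gradF x)
    (w : EuclideanSpace ℝ (Fin q)) (η : ℝ)
    (gn : Fin N → EuclideanSpace ℝ (Fin q))
    (wn : Fin N → EuclideanSpace ℝ (Fin q)) (hwn : ∀ n, wn n = w - η • gn n)
    (hlocal : ∀ n, gn n = gradFn n w)
    (α2 β2 : ℝ)
    (hdissim : ∑ n, ρ n * ‖gradFn n w‖ ^ 2 ≤ α2 * ‖gradF w‖ ^ 2 + β2) :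
    ‖gradF w - ∑ n, ρ n • gradFn n (wn n)‖ ^ 2 ≤
      L ^ 2 * η ^ 2 * (α2 * ‖gradF w‖ ^ 2 + β2) := by
  have hdrift : gradF w - ∑ n, ρ n • gradFn n (wn n)
      = ∑ n, ρ n • (gradFn n w - gradFn n (wn n)) := by
    simp only [← hagg w, smul_sub, sum_sub_distrib]
  calc ‖gradF w - ∑ n, ρ n • gradFn n (wn n)‖ ^ 2
      ≤ ∑ n, ρ n * ‖gradFn n w - gradFn n (wn n)‖ ^ 2 := by
        rw [hdrift]
        exact norm_sum_smul_sq_le _ ρ _ (fun n _ => hρ n) hρsum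
    _ ≤ ∑ n, ρ n * (L ^ 2 * η ^ 2 * ‖gradFn n w‖ ^ 2) := by
        gcongr with n
        · exact hρ n
        · rw [hwn n, hlocal n]
          exact norm_sub_apply_sub_smul_sq_le (hLip n) w _ η
    _ = L ^ 2 * η ^ 2 * ∑ n, ρ n * ‖gradFn n w‖ ^ 2 := by
        rw [mul_sum]
        exact sum_congr rfl fun n _ => by ring
    _ ≤ L ^ 2 * η ^ 2 * (α2 * ‖gradF w‖ ^ 2 + β2) := by gcongr

/-- Single-local-step drift bound in FedSGD-ISCC under the bounded-dissimilarity
assumption: the discrepancy between the global gradient and the aggregate of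
local gradients after one step of size η is at most `L²η²(α²‖∇F(w)‖² + β²)`. -/
theorem fedsgd_single_step_drift {q N : ℕ}
    (gradF : EuclideanSpace ℝ (Fin q) → EuclideanSpace ℝ (Fin q))
    (gradFn : Fin N → EuclideanSpace ℝ (Fin q) → EuclideanSpace ℝ (Fin q))
    (L : ℝ) (hL : 0 ≤ L)
    (hLip : ∀ n x y, ‖gradFn n x - gradFn n y‖ ≤ L * ‖x - y‖)
    (ρ : Fin N → ℝ) (hρ : ∀ n, 0 ≤ ρ n) (hρsum : ∑ n, ρ n = 1)
    (hagg : ∀ x, ∑ n, ρ n • gradFn n x = gradF x)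
    (w : EuclideanSpace ℝ (Fin q)) (η : ℝ) (hη : 0 ≤ η)
    (gn : Fin N → EuclideanSpace ℝ (Fin q))
    (wn : Fin N → EuclideanSpace ℝ (Fin q)) (hwn : ∀ n, wn n = w - η • gn n)
    (hlocal : ∀ n, gn n = gradFn n w)
    (α2 β2 : ℝ) (hα2 : 1 ≤ α2) (hβ2 : 0 ≤ β2)
    (hdissim : ∑ n, ρ n * ‖gradFn n w‖ ^ 2 ≤ α2 * ‖gradF w‖ ^ 2 + β2) :
    ‖gradF w - ∑ n, ρ n • gradFn n (wn n)‖ ^ 2 ≤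
      L ^ 2 * η ^ 2 * (α2 * ‖gradF w‖ ^ 2 + β2) :=
  fedsgd_single_step_drift_general gradF gradFn L hLip ρ hρ hρsum hagg w η gn wn hwn hlocal α2 β2
    hdissim
end

section
/- Under Assumptions 1–4 with 1 ≤ α² < 2, learning rate η > 0, τ ≥ 1 local steps satisfying 2L²η²τ(τ−1) ≤ min{1/5, S_t²/(S_t² + 4S_{t-1}²)} for all t, and the per-round descent bound of Lemma 2 holding, the average squared gradient norm of FedAVG-ISCC after T rounds satisfies (1/T) Σ_{t=1}^{T} E‖∇F(w_{t-1}; S_{t-1})‖² ≤ 4(F(w_0;S_0) − F*)/((2−α²)Tητ) + 4 Σ_t E‖ε_t‖²/((2−α²)Tη²τ²) + 4Lησ² Σ_n (ρ^n)²/(2−α²) + [(1 + Σ_{t=2}^T S_t²/S_{t-1}²)β² + α² Σ_{t=2}^T (D_t²/S_{t-1}²)G_t]/((2−α²)T) + L²η²σ²(τ−1)[5 + Σ_{t=2}^T (4 + S_t²/S_{t-1}²)]/((2−α²)T). -/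
set_option maxHeartbeats 1600000 in
/-- Theorem 1 (FedAVG-ISCC): given the per-round descent bound of Lemma 2,
the average (expected) squared gradient norm after `T` rounds is bounded by
initialization, communication-error, variance, sensing/Non-IID, and drift terms.
Here `Φ t = E F(w_t; S_t)`, `g t = E‖∇F(w_t; S_t)‖²`, `eps t = E‖ε_t‖²`,
`S t`/`D t` are the cumulative/new dataset sizes and `G t` the gradient bounds. -/
theorem fedavg_iscc_convergence (T N τ : ℕ) (hT : 1 ≤ T) (hτ : 1 ≤ τ)
    (η L σ2 α2 β2 Fstar : ℝ) (ρ : Fin N → ℝ)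
    (hη : 0 < η) (hL : 0 < L) (hσ2 : 0 ≤ σ2)
    (hα2lb : 1 ≤ α2) (hα2ub : α2 < 2) (hβ2 : 0 ≤ β2)
    (Φ g eps S D G : ℕ → ℝ)
    (hg : ∀ t, 0 ≤ g t) (heps : ∀ t, 0 ≤ eps t)
    (hS : ∀ t, 0 < S t) (hD : ∀ t, 0 ≤ D t) (hG : ∀ t, 0 ≤ G t)
    (hFstar : ∀ t, Fstar ≤ Φ t)
    (hlr : ∀ t ∈ Finset.Icc 1 T,
      2 * L ^ 2 * η ^ 2 * (τ : ℝ) * ((τ : ℝ) - 1) ≤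
        min (1 / 5) ((S t) ^ 2 / ((S t) ^ 2 + 4 * (S (t - 1)) ^ 2)))
    (hlemma2_first : Φ 1 - Φ 0 ≤
      -(η * (τ : ℝ) / 4) * (2 - α2) * g 0
      + L * (τ : ℝ) * η ^ 2 * σ2 * (∑ n, (ρ n) ^ 2)
      + (1 / (η * (τ : ℝ))) * eps 1
      + 5 * L ^ 2 * η ^ 3 * σ2 * (τ : ℝ) * ((τ : ℝ) - 1) / 4
      + β2 * η * (τ : ℝ) / 4)
    (hlemma2_rest : ∀ t ∈ Finset.Icc 2 T, Φ t - Φ (t - 1) ≤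
      -((τ : ℝ) * η / 4) * (2 - α2) * g (t - 1)
      + L * (τ : ℝ) * η ^ 2 * σ2 * (∑ n, (ρ n) ^ 2)
      + (1 / (η * (τ : ℝ))) * eps t
      + (1 + (S t) ^ 2 / (4 * (S (t - 1)) ^ 2)) * L ^ 2 * η ^ 3 * σ2 * (τ : ℝ) * ((τ : ℝ) - 1)
      + η * (τ : ℝ) * (S t) ^ 2 / (4 * (S (t - 1)) ^ 2) * β2
      + η * (τ : ℝ) * α2 / 4 * ((D t) ^ 2 / (S (t - 1)) ^ 2) * G t) :
    (1 / (T : ℝ)) * ∑ t ∈ Finset.Icc 1 T, g (t - 1) ≤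
      4 * (Φ 0 - Fstar) / ((2 - α2) * (T : ℝ) * η * (τ : ℝ))
      + 4 * (∑ t ∈ Finset.Icc 1 T, eps t) / ((2 - α2) * (T : ℝ) * η ^ 2 * (τ : ℝ) ^ 2)
      + 4 * L * η * σ2 * (∑ n, (ρ n) ^ 2) / (2 - α2)
      + (1 / ((2 - α2) * (T : ℝ))) *
          ((1 + ∑ t ∈ Finset.Icc 2 T, (S t) ^ 2 / (S (t - 1)) ^ 2) * β2
            + α2 * ∑ t ∈ Finset.Icc 2 T, ((D t) ^ 2 / (S (t - 1)) ^ 2) * G t)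
      + L ^ 2 * η ^ 2 * σ2 * ((τ : ℝ) - 1) / ((2 - α2) * (T : ℝ)) *
          (5 + ∑ t ∈ Finset.Icc 2 T, (4 + (S t) ^ 2 / (S (t - 1)) ^ 2)) := by
  have hT0 : (0:ℝ) < T := by exact_mod_cast hT
  have hτ0 : (0:ℝ) < τ := by exact_mod_cast hτ
  have hα : (0:ℝ) < 2 - α2 := by linarith
  set P : ℝ := ∑ n, (ρ n) ^ 2 with hPdef
  set X : ℝ := ∑ t ∈ Finset.Icc 1 T, g (t - 1) with hXdef
  set E : ℝ := ∑ t ∈ Finset.Icc 1 T, eps t with hEdef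
  set Sb : ℝ := ∑ t ∈ Finset.Icc 2 T, (S t) ^ 2 / (S (t - 1)) ^ 2 with hSbdef
  set Sa : ℝ := ∑ t ∈ Finset.Icc 2 T, ((D t) ^ 2 / (S (t - 1)) ^ 2) * G t with hSadef
  set Sd : ℝ := ∑ t ∈ Finset.Icc 2 T, (4 + (S t) ^ 2 / (S (t - 1)) ^ 2) with hSddef
  clear_value P X E Sb Sa Sd
  -- telescoping
  have tel : Φ T - Φ 0 = ∑ t ∈ Finset.Icc 1 T, (Φ t - Φ (t - 1)) := by
    have key : ∀ n : ℕ, Φ n - Φ 0 = ∑ t ∈ Finset.Icc 1 n, (Φ t - Φ (t - 1)) := by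
      intro n
      induction n with
      | zero => simp
      | succ k ih =>
        rw [Finset.sum_Icc_succ_top (by omega : 1 ≤ k + 1), ← ih]
        simp only [Nat.add_sub_cancel]
        ring
    exact key T
  -- per-round bound, unified
  have hB : ∀ t ∈ Finset.Icc 1 T, Φ t - Φ (t - 1) ≤
      -(η * (τ:ℝ) / 4) * (2 - α2) * g (t - 1) + L * (τ:ℝ) * η ^ 2 * σ2 * P
        + (1 / (η * (τ:ℝ))) * eps t +
      (if t = 1 then 5 * L ^ 2 * η ^ 3 * σ2 * (τ:ℝ) * ((τ:ℝ) - 1) / 4 + β2 * η * (τ:ℝ) / 4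
       else (1 + (S t) ^ 2 / (4 * (S (t - 1)) ^ 2)) * L ^ 2 * η ^ 3 * σ2 * (τ:ℝ) * ((τ:ℝ) - 1)
            + η * (τ:ℝ) * (S t) ^ 2 / (4 * (S (t - 1)) ^ 2) * β2
            + η * (τ:ℝ) * α2 / 4 * ((D t) ^ 2 / (S (t - 1)) ^ 2) * G t) := by
    intro t ht
    rcases eq_or_ne t 1 with rfl | h1
    · rw [if_pos rfl, show (1:ℕ) - 1 = 0 from rfl]
      linarith [hlemma2_first]
    · have ht2 : t ∈ Finset.Icc 2 T := by
        simp only [Finset.mem_Icc] at ht ⊢; omega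
      have h := hlemma2_rest t ht2
      rw [if_neg h1]
      nlinarith [h]
  have hsum0 := Finset.sum_le_sum hB
  rw [← tel] at hsum0
  -- compute the RHS sum
  have e1 : ∑ t ∈ Finset.Icc 1 T, (-(η * (τ:ℝ) / 4) * (2 - α2) * g (t - 1))
      = -(η * (τ:ℝ) / 4) * (2 - α2) * X := by
    rw [hXdef, Finset.mul_sum]
  have e2 : ∑ _t ∈ Finset.Icc 1 T, (L * (τ:ℝ) * η ^ 2 * σ2 * P)
      = (T:ℝ) * (L * (τ:ℝ) * η ^ 2 * σ2 * P) := by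
    rw [Finset.sum_const, Nat.card_Icc, Nat.add_sub_cancel, nsmul_eq_mul]
  have e3 : ∑ t ∈ Finset.Icc 1 T, ((1 / (η * (τ:ℝ))) * eps t) = (1 / (η * (τ:ℝ))) * E := by
    rw [hEdef, Finset.mul_sum]
  have hins : Finset.Icc 1 T = insert 1 (Finset.Icc 2 T) := by
    ext x; simp only [Finset.mem_Icc, Finset.mem_insert]; omega
  have e4' : (∑ t ∈ Finset.Icc 2 T,
      (if t = 1 then 5 * L ^ 2 * η ^ 3 * σ2 * (τ:ℝ) * ((τ:ℝ) - 1) / 4 + β2 * η * (τ:ℝ) / 4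
       else (1 + (S t) ^ 2 / (4 * (S (t - 1)) ^ 2)) * L ^ 2 * η ^ 3 * σ2 * (τ:ℝ) * ((τ:ℝ) - 1)
            + η * (τ:ℝ) * (S t) ^ 2 / (4 * (S (t - 1)) ^ 2) * β2
            + η * (τ:ℝ) * α2 / 4 * ((D t) ^ 2 / (S (t - 1)) ^ 2) * G t))
      = (L ^ 2 * η ^ 3 * σ2 * (τ:ℝ) * ((τ:ℝ) - 1) / 4) * Sd
        + (η * (τ:ℝ) * β2 / 4) * Sb + (η * (τ:ℝ) * α2 / 4) * Sa := by
    rw [hSddef, hSbdef, hSadef, Finset.mul_sum, Finset.mul_sum, Finset.mul_sum,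
      ← Finset.sum_add_distrib, ← Finset.sum_add_distrib]
    apply Finset.sum_congr rfl
    intro t ht
    have ht1 : t ≠ 1 := by simp only [Finset.mem_Icc] at ht; omega
    rw [if_neg ht1]
    ring
  have e4 : (∑ t ∈ Finset.Icc 1 T,
      (if t = 1 then 5 * L ^ 2 * η ^ 3 * σ2 * (τ:ℝ) * ((τ:ℝ) - 1) / 4 + β2 * η * (τ:ℝ) / 4
       else (1 + (S t) ^ 2 / (4 * (S (t - 1)) ^ 2)) * L ^ 2 * η ^ 3 * σ2 * (τ:ℝ) * ((τ:ℝ) - 1)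
            + η * (τ:ℝ) * (S t) ^ 2 / (4 * (S (t - 1)) ^ 2) * β2
            + η * (τ:ℝ) * α2 / 4 * ((D t) ^ 2 / (S (t - 1)) ^ 2) * G t))
      = (5 * L ^ 2 * η ^ 3 * σ2 * (τ:ℝ) * ((τ:ℝ) - 1) / 4 + β2 * η * (τ:ℝ) / 4)
        + ((L ^ 2 * η ^ 3 * σ2 * (τ:ℝ) * ((τ:ℝ) - 1) / 4) * Sd
           + (η * (τ:ℝ) * β2 / 4) * Sb + (η * (τ:ℝ) * α2 / 4) * Sa) := by
    rw [hins, Finset.sum_insert (by simp), if_pos rfl, e4']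
  have hK : (η * (τ:ℝ) / 4) * (2 - α2) * X ≤
      (Φ 0 - Fstar) + (T:ℝ) * (L * (τ:ℝ) * η ^ 2 * σ2 * P) + (1 / (η * (τ:ℝ))) * E
      + (5 * L ^ 2 * η ^ 3 * σ2 * (τ:ℝ) * ((τ:ℝ) - 1) / 4 + β2 * η * (τ:ℝ) / 4)
      + ((L ^ 2 * η ^ 3 * σ2 * (τ:ℝ) * ((τ:ℝ) - 1) / 4) * Sd
         + (η * (τ:ℝ) * β2 / 4) * Sb + (η * (τ:ℝ) * α2 / 4) * Sa) := by
    have hF := hFstar T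
    rw [Finset.sum_add_distrib, Finset.sum_add_distrib, Finset.sum_add_distrib,
      e1, e2, e3, e4] at hsum0
    linarith
  have hd : (0:ℝ) < 4 / ((2 - α2) * (T:ℝ) * η * (τ:ℝ)) := by positivity
  have hfin := mul_le_mul_of_nonneg_left hK hd.le
  have hne1 : (2 - α2) ≠ 0 := hα.ne'
  have hne2 : (T:ℝ) ≠ 0 := hT0.ne'
  have hne3 : η ≠ 0 := hη.ne'
  have hne4 : (τ:ℝ) ≠ 0 := hτ0.ne'
  have h0 : (1 / (T:ℝ)) * X = (4 / ((2 - α2) * (T:ℝ) * η * (τ:ℝ))) *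
      ((η * (τ:ℝ) / 4) * (2 - α2) * X) := by
    field_simp
  have h1 : (4 / ((2 - α2) * (T:ℝ) * η * (τ:ℝ))) * (Φ 0 - Fstar)
      = 4 * (Φ 0 - Fstar) / ((2 - α2) * (T:ℝ) * η * (τ:ℝ)) := by ring
  have h2 : (4 / ((2 - α2) * (T:ℝ) * η * (τ:ℝ))) * ((1 / (η * (τ:ℝ))) * E)
      = 4 * E / ((2 - α2) * (T:ℝ) * η ^ 2 * (τ:ℝ) ^ 2) := by
    rw [show (1 / (η * (τ:ℝ))) * E = E / (η * (τ:ℝ)) from by ring, div_mul_div_comm]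
    congr 1
    ring
  have h3 : (4 / ((2 - α2) * (T:ℝ) * η * (τ:ℝ))) * ((T:ℝ) * (L * (τ:ℝ) * η ^ 2 * σ2 * P))
      = 4 * L * η * σ2 * P / (2 - α2) := by
    field_simp
  have h4 : (4 / ((2 - α2) * (T:ℝ) * η * (τ:ℝ))) * (β2 * η * (τ:ℝ) / 4)
        + (4 / ((2 - α2) * (T:ℝ) * η * (τ:ℝ))) * ((η * (τ:ℝ) * β2 / 4) * Sb)
        + (4 / ((2 - α2) * (T:ℝ) * η * (τ:ℝ))) * ((η * (τ:ℝ) * α2 / 4) * Sa)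
      = (1 / ((2 - α2) * (T:ℝ))) * ((1 + Sb) * β2 + α2 * Sa) := by
    field_simp
  have h5 : (4 / ((2 - α2) * (T:ℝ) * η * (τ:ℝ))) * (5 * L ^ 2 * η ^ 3 * σ2 * (τ:ℝ) * ((τ:ℝ) - 1) / 4)
        + (4 / ((2 - α2) * (T:ℝ) * η * (τ:ℝ))) * ((L ^ 2 * η ^ 3 * σ2 * (τ:ℝ) * ((τ:ℝ) - 1) / 4) * Sd)
      = L ^ 2 * η ^ 2 * σ2 * ((τ:ℝ) - 1) / ((2 - α2) * (T:ℝ)) * (5 + Sd) := by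
    field_simp
  have hdist : (4 / ((2 - α2) * (T:ℝ) * η * (τ:ℝ))) *
      ((Φ 0 - Fstar) + (T:ℝ) * (L * (τ:ℝ) * η ^ 2 * σ2 * P) + (1 / (η * (τ:ℝ))) * E
        + (5 * L ^ 2 * η ^ 3 * σ2 * (τ:ℝ) * ((τ:ℝ) - 1) / 4 + β2 * η * (τ:ℝ) / 4)
        + ((L ^ 2 * η ^ 3 * σ2 * (τ:ℝ) * ((τ:ℝ) - 1) / 4) * Sd
           + (η * (τ:ℝ) * β2 / 4) * Sb + (η * (τ:ℝ) * α2 / 4) * Sa))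
      = (4 / ((2 - α2) * (T:ℝ) * η * (τ:ℝ))) * (Φ 0 - Fstar)
      + (4 / ((2 - α2) * (T:ℝ) * η * (τ:ℝ))) * ((1 / (η * (τ:ℝ))) * E)
      + (4 / ((2 - α2) * (T:ℝ) * η * (τ:ℝ))) * ((T:ℝ) * (L * (τ:ℝ) * η ^ 2 * σ2 * P))
      + ((4 / ((2 - α2) * (T:ℝ) * η * (τ:ℝ))) * (β2 * η * (τ:ℝ) / 4)
        + (4 / ((2 - α2) * (T:ℝ) * η * (τ:ℝ))) * ((η * (τ:ℝ) * β2 / 4) * Sb)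
        + (4 / ((2 - α2) * (T:ℝ) * η * (τ:ℝ))) * ((η * (τ:ℝ) * α2 / 4) * Sa))
      + ((4 / ((2 - α2) * (T:ℝ) * η * (τ:ℝ))) * (5 * L ^ 2 * η ^ 3 * σ2 * (τ:ℝ) * ((τ:ℝ) - 1) / 4)
        + (4 / ((2 - α2) * (T:ℝ) * η * (τ:ℝ))) * ((L ^ 2 * η ^ 3 * σ2 * (τ:ℝ) * ((τ:ℝ) - 1) / 4) * Sd)) := by
    ring
  rw [hdist] at hfin
  linarith [hfin]
end

section
/- Under Assumptions 1, 2, 4 with 1 ≤ α² < 2 and learning rate 0 < η ≤ min{1/L, S_t/(2√2 L S_{t-1})} for all t, and given the per-round descent bound of Lemma 3, the average squared gradient norm of FedSGD-ISCC after T rounds satisfies (1/T) Σ_{t=1}^{T} E‖∇F(w_{t-1}; S_{t-1})‖² ≤ 4(F(w_0;S_0) − F*)/((2−α²)Tη) + 4 Σ_t E‖ε_t‖²/((2−α²)T) + [(1 + Σ_{t=2}^T S_t²/S_{t-1}²)β² + α² Σ_{t=2}^T (D_t²/S_{t-1}²)G_t]/((2−α²)T). -/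
/-- Theorem 2 (FedSGD-ISCC): given the per-round descent bound of Lemma 3,
the average (expected) squared gradient norm after `T` rounds is bounded by
initialization, communication-error, and sensing/Non-IID terms.
Here `Φ t = E F(w_t; S_t)`, `g t = E‖∇F(w_t; S_t)‖²`, `eps t = E‖ε_t‖²`,
`S t`/`D t` are the cumulative/new dataset sizes and `G t` the gradient bounds. -/
theorem fedsgd_iscc_convergence (T : ℕ) (hT : 1 ≤ T)
    (η L σ2 α2 β2 Fstar : ℝ)
    (hη : 0 < η) (hL : 0 < L) (hσ2 : 0 ≤ σ2)
    (hα2lb : 1 ≤ α2) (hα2ub : α2 < 2) (hβ2 : 0 ≤ β2)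
    (Φ g eps S D G : ℕ → ℝ)
    (hg : ∀ t, 0 ≤ g t) (heps : ∀ t, 0 ≤ eps t)
    (hS : ∀ t, 0 < S t) (hD : ∀ t, 0 ≤ D t) (hG : ∀ t, 0 ≤ G t)
    (hFstar : ∀ t, Fstar ≤ Φ t)
    (hlr : ∀ t ∈ Finset.Icc 1 T,
      η ≤ min (1 / L) (1 / (2 * Real.sqrt 2 * L) * (S t / S (t - 1))))
    (hlemma3_first : Φ 1 - Φ 0 ≤
      -(η / 4) * (2 - α2) * g 0 + η * eps 1 + η * β2 / 4)
    (hlemma3_rest : ∀ t ∈ Finset.Icc 2 T, Φ t - Φ (t - 1) ≤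
      -(η / 4) * (2 - α2) * g (t - 1) + η * eps t
      + (η / 4) * ((S t) ^ 2 / (S (t - 1)) ^ 2) * β2
      + (η * α2 / 4) * ((D t) ^ 2 / (S (t - 1)) ^ 2) * G t) :
    (1 / (T : ℝ)) * ∑ t ∈ Finset.Icc 1 T, g (t - 1) ≤
      4 * (Φ 0 - Fstar) / ((2 - α2) * (T : ℝ) * η)
      + 4 * (∑ t ∈ Finset.Icc 1 T, eps t) / ((2 - α2) * (T : ℝ))
      + (1 / ((2 - α2) * (T : ℝ))) *
          ((1 + ∑ t ∈ Finset.Icc 2 T, (S t) ^ 2 / (S (t - 1)) ^ 2) * β2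
            + α2 * ∑ t ∈ Finset.Icc 2 T, ((D t) ^ 2 / (S (t - 1)) ^ 2) * G t) := by

  have hc : (0:ℝ) < 2 - α2 := by linarith
  have hTpos : (0:ℝ) < (T:ℝ) := by exact_mod_cast hT
  -- key summed inequality
  have key : ∀ n, 1 ≤ n →
      (∀ t ∈ Finset.Icc 2 n, Φ t - Φ (t - 1) ≤
        -(η / 4) * (2 - α2) * g (t - 1) + η * eps t
        + (η / 4) * ((S t) ^ 2 / (S (t - 1)) ^ 2) * β2
        + (η * α2 / 4) * ((D t) ^ 2 / (S (t - 1)) ^ 2) * G t) →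
      (η / 4) * (2 - α2) * ∑ t ∈ Finset.Icc 1 n, g (t - 1) ≤
        (Φ 0 - Φ n) + η * ∑ t ∈ Finset.Icc 1 n, eps t
        + (η / 4) * ((1 + ∑ t ∈ Finset.Icc 2 n, (S t) ^ 2 / (S (t - 1)) ^ 2) * β2)
        + (η * α2 / 4) * ∑ t ∈ Finset.Icc 2 n, ((D t) ^ 2 / (S (t - 1)) ^ 2) * G t := by
    intro n hn
    induction n, hn using Nat.le_induction with
    | base =>
      intro _
      simp only [Finset.Icc_self, Finset.sum_singleton, show Finset.Icc 2 1 = ∅ from rfl,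
        Finset.sum_empty]
      norm_num
      linarith [hlemma3_first]
    | succ m hm ih =>
      intro h
      have ih' := ih (fun t ht => h t (Finset.mem_of_subset
        (Finset.Icc_subset_Icc_right (Nat.le_succ m)) ht))
      have hlast := h (m + 1) (by simp [Finset.mem_Icc]; omega)
      rw [Finset.sum_Icc_succ_top (by omega : 1 ≤ m + 1),
        Finset.sum_Icc_succ_top (by omega : 1 ≤ m + 1),
        Finset.sum_Icc_succ_top (by omega : 2 ≤ m + 1),
        Finset.sum_Icc_succ_top (by omega : 2 ≤ m + 1)]
      simp only [Nat.add_sub_cancel] at hlast ⊢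
      nlinarith [ih', hlast]
  have hkey := key T hT hlemma3_rest
  have hFT := hFstar T
  set SG := ∑ t ∈ Finset.Icc 1 T, g (t - 1) with hSG
  set SE := ∑ t ∈ Finset.Icc 1 T, eps t with hSE
  set B := (1 + ∑ t ∈ Finset.Icc 2 T, (S t) ^ 2 / (S (t - 1)) ^ 2) * β2
      + α2 * ∑ t ∈ Finset.Icc 2 T, ((D t) ^ 2 / (S (t - 1)) ^ 2) * G t with hB
  have hkey2 : (η / 4) * (2 - α2) * SG ≤ (Φ 0 - Fstar) + η * SE + (η / 4) * B := by
    rw [hB]; nlinarith [hkey]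
  have hne1 : (2 - α2) ≠ 0 := ne_of_gt hc
  have hne2 : (T:ℝ) ≠ 0 := ne_of_gt hTpos
  have hne3 : η ≠ 0 := ne_of_gt hη
  calc (1 / (T:ℝ)) * SG = ((η / 4) * (2 - α2) * SG) * (4 / ((2 - α2) * T * η)) := by
        field_simp
    _ ≤ ((Φ 0 - Fstar) + η * SE + (η / 4) * B) * (4 / ((2 - α2) * T * η)) := by
        apply mul_le_mul_of_nonneg_right hkey2; positivity
    _ = 4 * (Φ 0 - Fstar) / ((2 - α2) * T * η) + 4 * SE / ((2 - α2) * T)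
        + (1 / ((2 - α2) * T)) * B := by field_simp
end
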